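/- For |A| > 1, a right congruence ρ on A^k is special (i.e., ρ = τ_I for some ideal I ⊇ A^k) if and only if ρ = τ_{Res(ρ)}, if and only if Λ'_ρ ⊆ Res(ρ), if and only if the map C ↦ lcs(C) from A^k/ρ to A^{≤k} is injective and Λ_ρ is a suffix code. -/

import Mathlib

/-- Words of length `k` over `A`. -/
abbrev Word (A : Type*) (k : ℕ) := {w : List A // w.length = k}

/-- The shift action of a letter: `u.a` is the suffix of length `k` of `u a`. -/
def act {A : Type*} (k : ℕ) (a : A) (u : Word A k) : Word A k :=
  ⟨(u.val ++ [a]).drop ((u.val ++ [a]).length - k), by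
    have h := u.2
    simp only [List.length_drop, List.length_append, List.length_cons,
      List.length_nil, h]
    omega⟩

/-- A right congruence on `A^k`. -/
def IsRC {A : Type*} (k : ℕ) (r : Word A k → Word A k → Prop) : Prop :=
  Equivalence r ∧ ∀ u v : Word A k, r u v → ∀ a : A, r (act k a u) (act k a v)

/-- The relation `τ_I` on `A^k`: a common suffix in `I`. -/
def tauW {A : Type*} (k : ℕ) (I : Set (List A)) (u v : Word A k) : Prop :=
  ∃ w ∈ I, w <:+ u.val ∧ w <:+ v.val

/-- `w` is the longest common suffix of `u` and `v`. -/
def IsLcs {A : Type*} (u v w : List A) : Prop :=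
  w <:+ u ∧ w <:+ v ∧ ∀ w' : List A, w' <:+ u → w' <:+ v → w' <:+ w

/-- `w` is the longest common suffix of the `ρ`-class of `u`. -/
def IsLcsClass {A : Type*} {k : ℕ} (ρ : Word A k → Word A k → Prop)
    (u : Word A k) (w : List A) : Prop :=
  (∀ v : Word A k, ρ u v → w <:+ v.val) ∧
    ∀ w' : List A, (∀ v : Word A k, ρ u v → w' <:+ v.val) → w' <:+ w

/-- `Λ_ρ = { lcs(C) : C ∈ A^k/ρ }`. -/
def Lam {A : Type*} {k : ℕ} (ρ : Word A k → Word A k → Prop) : Set (List A) :=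
  {w | ∃ u : Word A k, IsLcsClass ρ u w}

/-- `Λ'_ρ = { lcs(u,v) : (u,v) ∈ ρ }`. -/
def Lam' {A : Type*} {k : ℕ} (ρ : Word A k → Word A k → Prop) : Set (List A) :=
  {w | ∃ u v : Word A k, ρ u v ∧ IsLcs u.val v.val w}

/-- `Res(ρ)`: words `w` such that all `u, v ∈ A^k` having suffix `w` are
`ρ`-equivalent. -/
def ResSuf {A : Type*} (k : ℕ) (ρ : Word A k → Word A k → Prop) : Set (List A) :=
  {w | ∀ u v : Word A k, w <:+ u.val → w <:+ v.val → ρ u v}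

/-- A suffix code: an antichain with respect to the suffix order. -/
def SuffixCode {A : Type*} (S : Set (List A)) : Prop :=
  ∀ u ∈ S, ∀ v ∈ S, u <:+ v → u = v

/-!
`Res(ρ)` is always an ideal containing `A^k` (closure under right extension is the right
congruence property) and `τ_{Res(ρ)} ⊆ ρ`; moreover `Res(ρ)` is the largest set `I` with
`τ_I ⊆ ρ`. So `ρ` is special exactly when `ρ ⊆ τ_{Res(ρ)}`, i.e. when the longest common suffix
of every `ρ`-related pair lies in `Res(ρ)`, which is upward closed in the suffix order.
Since the suffixes of a word form a chain, the lcs of a class is the lcs of one of its pairs,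
so `Λ_ρ ⊆ Λ'_ρ`; a class lcs in `Res(ρ)` then pins down its class, and conversely injectivity
together with the suffix code property shows that any word ending in a pair lcs has the
same class lcs, hence the same class.
-/

section

open List

variable {A : Type*}

theorem exists_isLcs (u v : List A) : ∃ w, IsLcs u v w := by
  induction u with
  | nil => exact ⟨[], nil_suffix, nil_suffix, fun _ h _ => h⟩
  | cons a u ih =>
    by_cases h : a :: u <:+ v
    · exact ⟨a :: u, suffix_refl _, h, fun _ h' _ => h'⟩
    · obtain ⟨w, hwu, hwv, hmax⟩ := ih
      refine ⟨w, hwu.trans (suffix_cons a u), hwv, fun w' hw'u hw'v => ?_⟩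
      rcases suffix_cons_iff.mp hw'u with rfl | hw'u
      · exact absurd hw'v h
      · exact hmax w' hw'u hw'v

variable {k : ℕ} {ρ : Word A k → Word A k → Prop}

theorem IsLcsClass.unique {u : Word A k} {w w' : List A} (h : IsLcsClass ρ u w)
    (h' : IsLcsClass ρ u w') : w = w' :=
  (h'.2 w h.1).eq_of_length ((h'.2 w h.1).length_le.antisymm (h.2 w' h'.1).length_le)

theorem IsLcsClass.of_rel (hρ : Equivalence ρ) {u v : Word A k} (huv : ρ u v) {w : List A}
    (h : IsLcsClass ρ u w) : IsLcsClass ρ v w :=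
  ⟨fun x hx => h.1 x (hρ.trans huv hx),
    fun w' hw' => h.2 w' fun x hx => hw' x (hρ.trans (hρ.symm huv) hx)⟩

/-- The shortest pairwise lcs `lcs(u, v₀)` over the class of `u` is the lcs of the class. -/
theorem exists_isLcsClass_isLcs (hρ : Equivalence ρ) (u : Word A k) :
    ∃ w v, ρ u v ∧ IsLcs u.val v.val w ∧ IsLcsClass ρ u w := by
  obtain ⟨w₀, hw₀⟩ := exists_isLcs u.val u.val
  obtain ⟨w, ⟨v, huv, hw⟩, hmin⟩ := (measure (length (α := A))).wf.has_min
    {w | ∃ v, ρ u v ∧ IsLcs u.val v.val w} ⟨w₀, u, hρ.refl u, hw₀⟩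
  refine ⟨w, v, huv, hw, fun x hux => ?_,
    fun w' hw' => hw.2.2 w' (hw' u (hρ.refl u)) (hw' v huv)⟩
  obtain ⟨w', hw'⟩ := exists_isLcs u.val x.val
  have hle : w.length ≤ w'.length := not_lt.mp (hmin w' ⟨x, hux, hw'⟩)
  exact (suffix_of_suffix_length_le hw.1 hw'.1 hle).trans hw'.2.1

theorem exists_isLcsClass (hρ : Equivalence ρ) (u : Word A k) : ∃ w, IsLcsClass ρ u w :=
  let ⟨w, _, _, _, hw⟩ := exists_isLcsClass_isLcs hρ u
  ⟨w, hw⟩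

theorem lam_subset_lam' (hρ : Equivalence ρ) : Lam ρ ⊆ Lam' ρ := by
  rintro w ⟨u, hw⟩
  obtain ⟨l, v, huv, hl, hcl⟩ := exists_isLcsClass_isLcs hρ u
  exact ⟨u, v, huv, hcl.unique hw ▸ hl⟩

theorem mem_resSuf_of_suffix {w w' : List A} (hw : w ∈ ResSuf k ρ) (h : w <:+ w') :
    w' ∈ ResSuf k ρ :=
  fun u v hu hv => hw u v (h.trans hu) (h.trans hv)

theorem mem_resSuf_of_length_eq (hρ : Equivalence ρ) {w : List A} (hw : w.length = k) :
    w ∈ ResSuf k ρ := by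
  intro u v hu hv
  have hu' : w = u.val := hu.eq_of_length (by rw [hw, u.2])
  have hv' : w = v.val := hv.eq_of_length (by rw [hw, v.2])
  obtain rfl : u = v := Subtype.ext (hu' ▸ hv')
  exact hρ.refl u

theorem act_val (a : A) (u : Word A k) : (act k a u).val = (u.val ++ [a]).drop 1 := by
  simp [act, u.2]

theorem append_singleton_mem_resSuf (hρ : IsRC k ρ) {w : List A} (hw : w ∈ ResSuf k ρ)
    (a : A) : w ++ [a] ∈ ResSuf k ρ := by
  -- `x = x₀ ++ w ++ [a]` is the image under `a` of `a :: x₀ ++ w`, which ends in `w`.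
  have lift : ∀ x : Word A k, w ++ [a] <:+ x.val →
      ∃ x' : Word A k, w <:+ x'.val ∧ act k a x' = x := by
    rintro x ⟨x₀, hx⟩
    have hlen : (a :: (x₀ ++ w)).length = k := by
      rw [← x.2, ← hx]; simp; omega
    refine ⟨⟨a :: (x₀ ++ w), hlen⟩, (suffix_append _ _).trans (suffix_cons _ _), ?_⟩
    exact Subtype.ext (by simp [act_val, ← hx])
  intro x y hx hy
  obtain ⟨x', hx'w, rfl⟩ := lift x hx
  obtain ⟨y', hy'w, rfl⟩ := lift y hy
  exact hρ.2 x' y' (hw x' y' hx'w hy'w) a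

theorem append_mem_resSuf (hρ : IsRC k ρ) {w : List A} (hw : w ∈ ResSuf k ρ) (z : List A) :
    w ++ z ∈ ResSuf k ρ := by
  induction z generalizing w with
  | nil => simpa using hw
  | cons a z ih => simpa using ih (append_singleton_mem_resSuf hρ hw a)

theorem rel_of_tauW_resSuf {u v : Word A k} (h : tauW k (ResSuf k ρ) u v) : ρ u v :=
  let ⟨_, hw, hu, hv⟩ := h
  hw u v hu hv

theorem subset_resSuf_of_tauW_imp {I : Set (List A)}
    (h : ∀ u v : Word A k, tauW k I u v → ρ u v) : I ⊆ ResSuf k ρ :=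
  fun w hw u v hu hv => h u v ⟨w, hw, hu, hv⟩

theorem tauW_mono {I J : Set (List A)} (hIJ : I ⊆ J) {u v : Word A k} (h : tauW k I u v) :
    tauW k J u v :=
  let ⟨w, hw, hu, hv⟩ := h
  ⟨w, hIJ hw, hu, hv⟩

theorem exists_ideal_iff_forall_rel_iff_tauW_resSuf (hρ : IsRC k ρ) :
    (∃ I : Set (List A), (∀ u v w : List A, w ∈ I → u ++ w ++ v ∈ I) ∧
        (∀ w : List A, w.length = k → w ∈ I) ∧
        (∀ u v : Word A k, ρ u v ↔ tauW k I u v)) ↔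
      ∀ u v : Word A k, ρ u v ↔ tauW k (ResSuf k ρ) u v := by
  constructor
  · rintro ⟨I, -, -, hI⟩ u v
    have hIRes : I ⊆ ResSuf k ρ := subset_resSuf_of_tauW_imp fun x y => (hI x y).2
    exact ⟨fun huv => tauW_mono hIRes ((hI u v).1 huv), rel_of_tauW_resSuf⟩
  · intro h
    refine ⟨ResSuf k ρ, fun p z w hw => ?_, fun w hw => mem_resSuf_of_length_eq hρ.1 hw, h⟩
    exact append_mem_resSuf hρ (mem_resSuf_of_suffix hw (suffix_append p w)) z

theorem forall_rel_iff_tauW_resSuf_iff_lam'_subset :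
    (∀ u v : Word A k, ρ u v ↔ tauW k (ResSuf k ρ) u v) ↔ Lam' ρ ⊆ ResSuf k ρ := by
  constructor
  · rintro h w ⟨u, v, huv, hw⟩
    obtain ⟨w', hw'Res, hw'u, hw'v⟩ := (h u v).1 huv
    exact mem_resSuf_of_suffix hw'Res (hw.2.2 w' hw'u hw'v)
  · intro h u v
    refine ⟨fun huv => ?_, rel_of_tauW_resSuf⟩
    obtain ⟨w, hw⟩ := exists_isLcs u.val v.val
    exact ⟨w, h ⟨u, v, huv, hw⟩, hw.1, hw.2.1⟩

theorem lam'_subset_resSuf_iff (hρ : Equivalence ρ) :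
    Lam' ρ ⊆ ResSuf k ρ ↔
      (∀ (u v : Word A k) (w : List A), IsLcsClass ρ u w → IsLcsClass ρ v w → ρ u v) ∧
        SuffixCode (Lam ρ) := by
  constructor
  · intro h
    have hLam : ∀ {u : Word A k} {w : List A}, IsLcsClass ρ u w → w ∈ ResSuf k ρ :=
      fun hw => h (lam_subset_lam' hρ ⟨_, hw⟩)
    refine ⟨fun u v w hu hv => hLam hu u v (hu.1 u (hρ.refl u)) (hv.1 v (hρ.refl v)), ?_⟩
    rintro w₁ ⟨u₁, h₁⟩ w₂ ⟨u₂, h₂⟩ hsuf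
    have hu₁u₂ : ρ u₁ u₂ :=
      hLam h₁ u₁ u₂ (h₁.1 u₁ (hρ.refl u₁)) (hsuf.trans (h₂.1 u₂ (hρ.refl u₂)))
    exact h₁.unique (h₂.of_rel hρ (hρ.symm hu₁u₂))
  · rintro ⟨hinj, hcode⟩ w ⟨u, v, huv, hw⟩ x y hx hy
    obtain ⟨l, hl⟩ := exists_isLcsClass hρ u
    have hlw : l <:+ w := hw.2.2 l (hl.1 u (hρ.refl u)) (hl.1 v huv)
    -- Two class lcs's that are suffixes of the same word are comparable, hence equal.
    have key : ∀ x : Word A k, w <:+ x.val → IsLcsClass ρ x l := by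
      intro x hx
      obtain ⟨lx, hlx⟩ := exists_isLcsClass hρ x
      obtain rfl : lx = l := by
        rcases suffix_or_suffix_of_suffix (hlx.1 x (hρ.refl x)) (hlw.trans hx) with h | h
        · exact hcode lx ⟨x, hlx⟩ l ⟨u, hl⟩ h
        · exact (hcode l ⟨u, hl⟩ lx ⟨x, hlx⟩ h).symm
      exact hlx
    exact hinj x y l (key x hx) (key y hy)

end

theorem special_rc_characterizations_general {A : Type*}
    (k : ℕ) (ρ : Word A k → Word A k → Prop) (hρ : IsRC k ρ) :
    ((∃ I : Set (List A), (∀ u v w : List A, w ∈ I → u ++ w ++ v ∈ I) ∧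
        (∀ w : List A, w.length = k → w ∈ I) ∧
        (∀ u v : Word A k, ρ u v ↔ tauW k I u v)) ↔
      (∀ u v : Word A k, ρ u v ↔ tauW k (ResSuf k ρ) u v)) ∧
    ((∀ u v : Word A k, ρ u v ↔ tauW k (ResSuf k ρ) u v) ↔
      Lam' ρ ⊆ ResSuf k ρ) ∧
    (Lam' ρ ⊆ ResSuf k ρ ↔
      ((∀ (u v : Word A k) (w : List A),
          IsLcsClass ρ u w → IsLcsClass ρ v w → ρ u v) ∧
        SuffixCode (Lam ρ))) :=
  ⟨exists_ideal_iff_forall_rel_iff_tauW_resSuf hρ, forall_rel_iff_tauW_resSuf_iff_lam'_subset,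
    lam'_subset_resSuf_iff hρ.1⟩

/-- for `|A| > 1`, a right congruence `ρ` on `A^k` is special
(`ρ = τ_I` for some ideal `I ⊇ A^k`) iff `ρ = τ_{Res(ρ)}`, iff `Λ'_ρ ⊆ Res(ρ)`,
iff `lcs : A^k/ρ → A^{≤k}` is injective and `Λ_ρ` is a suffix code. -/
theorem special_rc_characterizations {A : Type*} [Fintype A] (hA : 1 < Fintype.card A)
    (k : ℕ) (hk : 1 ≤ k) (ρ : Word A k → Word A k → Prop) (hρ : IsRC k ρ) :
    ((∃ I : Set (List A), (∀ u v w : List A, w ∈ I → u ++ w ++ v ∈ I) ∧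
        (∀ w : List A, w.length = k → w ∈ I) ∧
        (∀ u v : Word A k, ρ u v ↔ tauW k I u v)) ↔
      (∀ u v : Word A k, ρ u v ↔ tauW k (ResSuf k ρ) u v)) ∧
    ((∀ u v : Word A k, ρ u v ↔ tauW k (ResSuf k ρ) u v) ↔
      Lam' ρ ⊆ ResSuf k ρ) ∧
    (Lam' ρ ⊆ ResSuf k ρ ↔
      ((∀ (u v : Word A k) (w : List A),
          IsLcsClass ρ u w → IsLcsClass ρ v w → ρ u v) ∧
        SuffixCode (Lam ρ))) :=
  special_rc_characterizations_general k ρ hρ
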